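/- arXiv:2209.08935 — 3 statements merged into one kernel-verified Lean document; each statement's English description precedes it below -/
import Mathlib

section
/- Suppose v ∈ ℝ^n satisfies ‖v‖_∞ ≤ θ and ‖v‖₁ ≤ k·θ, where θ > 0 and k is a positive integer. Then there exist N vectors u₁, …, u_N ∈ ℝ^n and coefficients λ₁, …, λ_N with 0 ≤ λ_j ≤ 1 and Σ_{j=1}^N λ_j = 1 such that v = Σ_{j=1}^N λ_j·u_j, each u_j is k-sparse, and ‖u_j‖₁ ≤ ‖v‖₁ and ‖u_j‖_∞ ≤ θ for every j. -/
open scoped BigOperators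

noncomputable section

/-- A vector is `k`-sparse if it has at most `k` nonzero entries. -/
def sparseV {n : ℕ} (k : ℕ) (x : Fin n → ℝ) : Prop := {i | x i ≠ 0}.ncard ≤ k

/-- ℓ₁ norm of a real vector. -/
def norm1 {n : ℕ} (x : Fin n → ℝ) : ℝ := ∑ i, |x i|

/-!
Induct on the number of fractional coordinates of `v`, those with `0 < |v i| < θ`. If `i ≠ j`
are two of them, moving mass along `sign (v i) • e i - sign (v j) • e j` keeps `‖v‖₁` and
`‖v‖_∞ ≤ θ`; pushed in either direction until `v i` or `v j` reaches `0` or `±θ`, it writes `v`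
as a convex combination of two such vectors with fewer fractional coordinates. Once at most one
coordinate is fractional, every other nonzero coordinate has modulus at least `θ`, so
`‖v‖₁ ≤ k θ` leaves room for at most `k` nonzero coordinates.
-/

open Finset

section

variable {n : ℕ}

lemma abs_add_mul_sign {a t : ℝ} (ha : a ≠ 0) (ht : -|a| ≤ t) :
    |a + t * SignType.sign a| = |a| + t := by
  rcases ha.lt_or_gt with h | h
  · rw [abs_of_neg h] at ht ⊢
    rw [sign_neg h, SignType.coe_neg, SignType.coe_one, abs_of_nonpos (by linarith)]
    ring
  · rw [abs_of_pos h] at ht ⊢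
    rw [sign_pos h, SignType.coe_one, abs_of_nonneg (by linarith)]
    ring

def fractionalSupport (θ : ℝ) (v : Fin n → ℝ) : Finset (Fin n) :=
  univ.filter fun i => |v i| ∈ Set.Ioo 0 θ

lemma mem_fractionalSupport {θ : ℝ} {v : Fin n → ℝ} {i : Fin n} :
    i ∈ fractionalSupport θ v ↔ |v i| ∈ Set.Ioo 0 θ := by
  simp only [fractionalSupport, mem_filter, mem_univ, true_and]

lemma sparseV_of_card_fractionalSupport_le_one {v : Fin n → ℝ} {θ : ℝ} {k : ℕ} (hθ : 0 < θ)
    (h1 : norm1 v ≤ k * θ) (hF : #(fractionalSupport θ v) ≤ 1) : sparseV k v := by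
  set Z := univ.filter fun i => v i ≠ 0
  set F := fractionalSupport θ v
  have hFZ : F ⊆ Z := fun i hi => by
    simpa [Z] using (mem_fractionalSupport.mp hi).1
  have hfull : θ * #(Z \ F) ≤ ∑ i ∈ Z \ F, |v i| := by
    rw [mul_comm, ← nsmul_eq_mul]
    refine card_nsmul_le_sum _ _ _ fun i hi => ?_
    simp only [mem_sdiff, mem_filter, mem_univ, true_and, F, Z, mem_fractionalSupport] at hi
    exact not_lt.mp fun h => hi.2 ⟨abs_pos.mpr hi.1, h⟩
  have hfrac : θ * #F < ∑ i ∈ F, |v i| + θ := by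
    rcases Nat.le_one_iff_eq_zero_or_eq_one.mp hF with h | h
    · simp [card_eq_zero.mp h, hθ]
    · obtain ⟨i, hi⟩ := card_eq_one.mp h
      have : 0 < |v i| := (mem_fractionalSupport.mp (hi ▸ mem_singleton_self i : i ∈ F)).1
      simp [hi, this]
  have hsum : ∑ i ∈ Z \ F, |v i| + ∑ i ∈ F, |v i| ≤ norm1 v := by
    rw [sum_sdiff hFZ]
    exact sum_le_univ_sum_of_nonneg fun _ => abs_nonneg _
  have hcard : (#Z : ℝ) = #(Z \ F) + #F := by
    exact_mod_cast (card_sdiff_add_card_eq_card hFZ).symm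
  have hZ : (#Z : ℝ) < k + 1 := by
    refine lt_of_mul_lt_mul_left ?_ hθ.le
    rw [hcard]
    linarith
  have hsupport : {i | v i ≠ 0} = (Z : Set (Fin n)) := by ext; simp [Z]
  rw [sparseV, hsupport, Set.ncard_coe_finset, ← Nat.lt_succ_iff]
  exact_mod_cast hZ

def transferDir (v : Fin n → ℝ) (i j : Fin n) : Fin n → ℝ :=
  Pi.single i (SignType.sign (v i) : ℝ) - Pi.single j (SignType.sign (v j) : ℝ)

lemma transferDir_swap (v : Fin n → ℝ) (i j : Fin n) :
    transferDir v j i = -transferDir v i j :=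
  (neg_sub _ _).symm

section transfer

variable {v : Fin n → ℝ} {i j : Fin n} {c θ : ℝ}

lemma abs_add_smul_transferDir_apply (hij : i ≠ j) (hi : v i ≠ 0) (hj : v j ≠ 0) (hc : 0 ≤ c)
    (hcj : c ≤ |v j|) (x : Fin n) :
    |(v + c • transferDir v i j) x| =
      |v x| + ((Pi.single i c : Fin n → ℝ) x - (Pi.single j c : Fin n → ℝ) x) := by
  rcases eq_or_ne x i with rfl | hxi
  · simp [transferDir, hij, abs_add_mul_sign hi (by linarith [abs_nonneg (v x)] : -|v x| ≤ c)]
  rcases eq_or_ne x j with rfl | hxj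
  · have := abs_add_mul_sign hj (by linarith : -|v x| ≤ -c)
    simp [transferDir, hxi, ← sub_eq_add_neg] at this ⊢
    linarith
  · simp [transferDir, hxi, hxj]

lemma norm1_add_smul_transferDir (hij : i ≠ j) (hi : v i ≠ 0) (hj : v j ≠ 0) (hc : 0 ≤ c)
    (hcj : c ≤ |v j|) : norm1 (v + c • transferDir v i j) = norm1 v := by
  simp only [norm1, abs_add_smul_transferDir_apply hij hi hj hc hcj, sum_add_distrib,
    sum_sub_distrib, sum_pi_single', mem_univ, if_true, sub_self, add_zero]

lemma abs_add_smul_transferDir_apply_le (hij : i ≠ j) (hi : v i ≠ 0) (hj : v j ≠ 0) (hc : 0 ≤ c)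
    (hcj : c ≤ |v j|) (hci : c ≤ θ - |v i|) (hv : ∀ x, |v x| ≤ θ) (x : Fin n) :
    |(v + c • transferDir v i j) x| ≤ θ := by
  rw [abs_add_smul_transferDir_apply hij hi hj hc hcj]
  rcases eq_or_ne x i with rfl | hxi
  · simp [hij]
    linarith
  · simp only [Pi.single_apply, hxi, if_false]
    split_ifs <;> linarith [hv x]

lemma fractionalSupport_transfer_ssubset (hij : i ≠ j) (hi : i ∈ fractionalSupport θ v)
    (hj : j ∈ fractionalSupport θ v) :
    fractionalSupport θ (v + min (θ - |v i|) |v j| • transferDir v i j) ⊂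
      fractionalSupport θ v := by
  obtain ⟨hi₀, hiθ⟩ := mem_fractionalSupport.mp hi
  obtain ⟨hj₀, hjθ⟩ := mem_fractionalSupport.mp hj
  have habs := abs_add_smul_transferDir_apply (c := min (θ - |v i|) |v j|) hij (abs_pos.mp hi₀)
    (abs_pos.mp hj₀) (le_min (by linarith) hj₀.le) (min_le_right _ _)
  rw [ssubset_iff_of_subset]
  · rcases min_cases (θ - |v i|) |v j| with ⟨hc, -⟩ | ⟨hc, -⟩
    · refine ⟨i, hi, fun h => ?_⟩
      have := (mem_fractionalSupport.mp h).2
      rw [habs, hc] at this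
      simp [hij] at this
    · refine ⟨j, hj, fun h => ?_⟩
      have := (mem_fractionalSupport.mp h).1
      rw [habs, hc] at this
      simp [hij.symm] at this
  · intro x hx
    rcases eq_or_ne x i with rfl | hxi
    · exact hi
    rcases eq_or_ne x j with rfl | hxj
    · exact hj
    rw [mem_fractionalSupport, habs] at hx
    simpa [mem_fractionalSupport, hxi, hxj] using hx

end transfer

theorem subset_convexHull_sparseV {θ s : ℝ} {k : ℕ} (hθ : 0 < θ) (hs : s ≤ k * θ) :
    {v : Fin n → ℝ | (∀ i, |v i| ≤ θ) ∧ norm1 v ≤ s} ⊆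
      convexHull ℝ {u | sparseV k u ∧ norm1 u ≤ s ∧ ∀ i, |u i| ≤ θ} := by
  intro v hv
  induction hm : #(fractionalSupport θ v) using Nat.strong_induction_on generalizing v with
  | _ m ih =>
  obtain ⟨hinf, hnorm⟩ := hv
  by_cases hF : #(fractionalSupport θ v) ≤ 1
  · exact subset_convexHull ℝ _
      ⟨sparseV_of_card_fractionalSupport_le_one hθ (hnorm.trans hs) hF, hnorm, hinf⟩
  have transfer_mem : ∀ i j, i ∈ fractionalSupport θ v → j ∈ fractionalSupport θ v → i ≠ j →
      v + min (θ - |v i|) |v j| • transferDir v i j ∈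
        convexHull ℝ {u | sparseV k u ∧ norm1 u ≤ s ∧ ∀ i, |u i| ≤ θ} := by
    intro i j hi hj hij
    obtain ⟨hi₀, hiθ⟩ := mem_fractionalSupport.mp hi
    obtain ⟨hj₀, -⟩ := mem_fractionalSupport.mp hj
    have hc₀ : 0 ≤ min (θ - |v i|) |v j| := le_min (by linarith) hj₀.le
    refine ih _ (hm ▸ card_lt_card (fractionalSupport_transfer_ssubset hij hi hj))
      ⟨abs_add_smul_transferDir_apply_le hij (abs_pos.mp hi₀) (abs_pos.mp hj₀) hc₀
        (min_le_right _ _) (min_le_left _ _) hinf, ?_⟩ rfl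
    rwa [norm1_add_smul_transferDir hij (abs_pos.mp hi₀) (abs_pos.mp hj₀) hc₀ (min_le_right _ _)]
  obtain ⟨i, hi, j, hj, hij⟩ := one_lt_card.mp (not_le.mp hF)
  obtain ⟨hi₀, hiθ⟩ := mem_fractionalSupport.mp hi
  obtain ⟨hj₀, hjθ⟩ := mem_fractionalSupport.mp hj
  set a := min (θ - |v j|) |v i|
  set b := min (θ - |v i|) |v j|
  have ha : 0 < a := lt_min (by linarith) hi₀
  have hb : 0 < b := lt_min (by linarith) hj₀
  have hv : v = (a / (a + b)) • (v + b • transferDir v i j) +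
      (b / (a + b)) • (v + a • transferDir v j i) := by
    rw [transferDir_swap]
    match_scalars
    · field_simp
    · ring
  rw [hv]
  exact convex_convexHull ℝ _ (transfer_mem i j hi hj hij) (transfer_mem j i hj hi hij.symm)
    (by positivity) (by positivity) (by field_simp)

lemma exists_fin_of_mem_convexHull {E : Type*} [AddCommGroup E] [Module ℝ E] {s : Set E} {x : E}
    (hx : x ∈ convexHull ℝ s) :
    ∃ (N : ℕ) (z : Fin N → E) (w : Fin N → ℝ),
      (∀ j, 0 ≤ w j) ∧ ∑ j, w j = 1 ∧ x = ∑ j, w j • z j ∧ ∀ j, z j ∈ s := by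
  obtain ⟨ι, _, w, z, hw₀, hw₁, hz, rfl⟩ := mem_convexHull_iff_exists_fintype.mp hx
  let e := Fintype.equivFin ι
  refine ⟨Fintype.card ι, z ∘ e.symm, w ∘ e.symm, fun j => hw₀ _, ?_, ?_, fun j => hz _⟩
  · rw [← hw₁]
    exact e.symm.sum_comp w
  · exact (e.symm.sum_comp fun i => w i • z i).symm

end

theorem stmt11_general {n : ℕ} (v : Fin n → ℝ) (θ : ℝ) (hθ : 0 < θ) (k : ℕ)
    (hinf : ∀ i, |v i| ≤ θ) (h1 : norm1 v ≤ k * θ) :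
    ∃ (N : ℕ) (u : Fin N → Fin n → ℝ) (lam : Fin N → ℝ),
      (∀ j, 0 ≤ lam j ∧ lam j ≤ 1) ∧
      (∑ j, lam j = 1) ∧
      v = (∑ j, lam j • u j) ∧
      ∀ j, sparseV k (u j) ∧ norm1 (u j) ≤ norm1 v ∧ ∀ i, |u j i| ≤ θ := by
  obtain ⟨N, u, lam, hlam₀, hlam₁, hv, hu⟩ :=
    exists_fin_of_mem_convexHull (subset_convexHull_sparseV hθ h1 ⟨hinf, le_rfl⟩)
  refine ⟨N, u, lam, fun j => ⟨hlam₀ j, ?_⟩, hlam₁, hv, hu⟩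
  exact hlam₁ ▸ single_le_sum (fun j _ => hlam₀ j) (mem_univ j)

/-- Any vector `v` with `‖v‖_∞ ≤ θ` and `‖v‖₁ ≤ k·θ` is a convex combination of
`k`-sparse vectors `u_j` with `‖u_j‖₁ ≤ ‖v‖₁` and `‖u_j‖_∞ ≤ θ`. -/
theorem stmt11 {n : ℕ} (v : Fin n → ℝ) (θ : ℝ) (hθ : 0 < θ) (k : ℕ) (hk : 0 < k)
    (hinf : ∀ i, |v i| ≤ θ) (h1 : norm1 v ≤ k * θ) :
    ∃ (N : ℕ) (u : Fin N → Fin n → ℝ) (lam : Fin N → ℝ),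
      (∀ j, 0 ≤ lam j ∧ lam j ≤ 1) ∧
      (∑ j, lam j = 1) ∧
      v = (∑ j, lam j • u j) ∧
      ∀ j, sparseV k (u j) ∧ norm1 (u j) ≤ norm1 v ∧ ∀ i, |u j i| ≤ θ :=
  stmt11_general v θ hθ k hinf h1
end
end

section
/- For any vectors u, v ∈ ℂ^n whose inner product ⟨u, v⟩ is a nonnegative real number, ‖u u* − v v*‖_F ≥ (1/√2)·‖u‖₂·‖u − v‖₂. -/
open scoped BigOperators
open Matrix

noncomputable section

/-- Frobenius norm of a complex matrix. -/
def frob {N M : ℕ} (A : Matrix (Fin N) (Fin M) ℂ) : ℝ :=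
  Real.sqrt (∑ i, ∑ j, ‖A i j‖ ^ 2)

/-- ℓ₂ norm of a complex vector. -/
def norm2c {n : ℕ} (x : Fin n → ℂ) : ℝ := Real.sqrt (∑ i, ‖x i‖ ^ 2)

/-!
Writing `r = ⟨u, v⟩`, one has `‖u u* − v v*‖_F² = ‖u‖⁴ + ‖v‖⁴ − 2r²` and
`‖u − v‖² = ‖u‖² + ‖v‖² − 2r`, so the claim is a polynomial inequality in `‖u‖`, `‖v‖`, `r`
on the range `0 ≤ r ≤ ‖u‖‖v‖` allowed by Cauchy–Schwarz. The difference of the two sides is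
concave in `r`, so it suffices to check the endpoints `r = 0` and `r = ‖u‖‖v‖`.
-/

open RCLike ComplexConjugate

lemma sq_mul_sq_sub_two_mul_add_sq_div_two_le {s t r : ℝ} (hs : 0 ≤ s) (ht : 0 ≤ t)
    (hr : 0 ≤ r) (hrst : r ≤ s * t) :
    s ^ 2 * (s ^ 2 - 2 * r + t ^ 2) / 2 ≤ s ^ 4 + t ^ 4 - 2 * r ^ 2 := by
  have h_left : 0 ≤ s ^ 4 - s ^ 2 * t ^ 2 + 2 * t ^ 4 := by
    nlinarith [sq_nonneg (s ^ 2 - t ^ 2), sq_nonneg (t ^ 2)]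
  have h_right : 0 ≤ (s - t) ^ 2 * (s ^ 2 + 4 * s * t + 2 * t ^ 2) := by positivity
  -- with `f r` the difference: `s t · f r = (s t - r) f 0 + r f (s t) + 2 r s t (s t - r)`
  nlinarith [mul_nonneg (sub_nonneg.2 hrst) h_left, mul_nonneg hr h_right,
    mul_nonneg (mul_nonneg hr (sub_nonneg.2 hrst)) (mul_nonneg hs ht)]

lemma norm_sq_mul_norm_sub_sq_div_two_le {𝕜 E : Type*} [RCLike 𝕜] [NormedAddCommGroup E]
    [InnerProductSpace 𝕜 E] {x y : E} {r : ℝ} (hr : 0 ≤ r) (hxy : inner 𝕜 y x = (r : 𝕜)) :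
    ‖x‖ ^ 2 * ‖x - y‖ ^ 2 / 2 ≤ ‖x‖ ^ 4 + ‖y‖ ^ 4 - 2 * r ^ 2 := by
  have hre : re (inner 𝕜 x y) = r := by rw [← inner_conj_symm, hxy, conj_ofReal, ofReal_re]
  have hcs : r ≤ ‖x‖ * ‖y‖ := by
    simpa [hxy, abs_of_nonneg hr, mul_comm] using norm_inner_le_norm (𝕜 := 𝕜) y x
  rw [norm_sub_sq (𝕜 := 𝕜), hre]
  exact sq_mul_sq_sub_two_mul_add_sq_div_two_le (norm_nonneg x) (norm_nonneg y) hr hcs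

lemma sum_norm_sq_vecMulVec_sub {𝕜 ι : Type*} [RCLike 𝕜] [Fintype ι] (u v : ι → 𝕜) :
    ∑ i, ∑ j, ‖(vecMulVec u (star u) - vecMulVec v (star v)) i j‖ ^ 2 =
      (∑ i, ‖u i‖ ^ 2) ^ 2 + (∑ i, ‖v i‖ ^ 2) ^ 2 - 2 * ‖u ⬝ᵥ star v‖ ^ 2 := by
  apply RCLike.ofReal_injective (K := 𝕜)
  have h_two : (2 * ‖u ⬝ᵥ star v‖ ^ 2 : 𝕜) =
      (u ⬝ᵥ star v) * conj (u ⬝ᵥ star v) + conj (u ⬝ᵥ star v) * (u ⬝ᵥ star v) := by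
    rw [mul_conj, RCLike.conj_mul]; ring
  push_cast
  rw [h_two]
  simp only [← mul_conj]
  simp only [sq, Matrix.sub_apply, vecMulVec_apply, Pi.star_apply, RCLike.star_def,
    dotProduct, map_sub, map_mul, conj_conj, map_sum, Finset.sum_mul_sum,
    ← Finset.sum_add_distrib, ← Finset.sum_sub_distrib]
  exact Finset.sum_congr rfl fun i _ => Finset.sum_congr rfl fun j _ => by ring

lemma norm2c_eq_norm {n : ℕ} (x : Fin n → ℂ) : norm2c x = ‖WithLp.toLp 2 x‖ :=
  (EuclideanSpace.norm_eq _).symm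

lemma frob_vecMulVec_sub {n : ℕ} (u v : Fin n → ℂ) :
    frob (vecMulVec u (star u) - vecMulVec v (star v)) =
      Real.sqrt (‖WithLp.toLp 2 u‖ ^ 4 + ‖WithLp.toLp 2 v‖ ^ 4 -
        2 * ‖inner ℂ (WithLp.toLp 2 v) (WithLp.toLp 2 u)‖ ^ 2) := by
  have h_sq (x : Fin n → ℂ) : ‖WithLp.toLp 2 x‖ ^ 4 = (∑ i, ‖x i‖ ^ 2) ^ 2 := by
    rw [← EuclideanSpace.norm_sq_eq]; ring
  rw [frob, sum_norm_sq_vecMulVec_sub, EuclideanSpace.inner_toLp_toLp, h_sq, h_sq]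

/-- For vectors `u, v ∈ ℂ^n` with `⟨u, v⟩ = v* u` a nonnegative real number,
`‖u u* − v v*‖_F ≥ (1/√2)·‖u‖₂·‖u − v‖₂`. -/
theorem stmt12 {n : ℕ} (u v : Fin n → ℂ)
    (h : ∃ r : ℝ, 0 ≤ r ∧ star v ⬝ᵥ u = (r : ℂ)) :
    (1 / Real.sqrt 2) * norm2c u * norm2c (u - v) ≤
      frob (vecMulVec u (star u) - vecMulVec v (star v)) := by
  obtain ⟨r, hr, hvu⟩ := h
  have hinner : inner ℂ (WithLp.toLp 2 v) (WithLp.toLp 2 u) = (r : ℂ) := by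
    rw [EuclideanSpace.inner_toLp_toLp, dotProduct_comm, hvu]
  rw [frob_vecMulVec_sub, hinner, norm2c_eq_norm, norm2c_eq_norm, WithLp.toLp_sub,
    Complex.norm_real, Real.norm_of_nonneg hr]
  apply Real.le_sqrt_of_sq_le
  calc (1 / Real.sqrt 2 * ‖WithLp.toLp 2 u‖ * ‖WithLp.toLp 2 u - WithLp.toLp 2 v‖) ^ 2
      = ‖WithLp.toLp 2 u‖ ^ 2 * ‖WithLp.toLp 2 u - WithLp.toLp 2 v‖ ^ 2 / 2 := by
        rw [mul_pow, mul_pow, div_pow, Real.sq_sqrt zero_le_two]; ring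
    _ ≤ _ := norm_sq_mul_norm_sub_sq_div_two_le hr hinner
end
end

section
/- Let a ∈ ℂ^n be a complex standard Gaussian random vector and b ∈ ℝ. Let u₁, u₂, u₃ ∈ ℂ^n be orthonormal vectors, λ₁, λ₂ ∈ ℝ, σ₁, σ₂, σ₃ ∈ ℂ, and set H := λ₁·u₁u₁* + λ₂·u₂u₂* and h := σ₁u₁ + σ₂u₂ + σ₃u₃. Then the random variable ξ := a* H a + 2·Re( b·(a* h) ) satisfies E[ξ⁴] ≤ 576·( ‖H‖_F² + b²·‖h‖₂² )², where ‖H‖_F² = λ₁² + λ₂² and ‖h‖₂² = |σ₁|² + |σ₂|² + |σ₃|². -/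
/-!
Write `zₖ = ⟨a, uₖ⟩`. Then `ξ = λ₁ |z₁|² + λ₂ |z₂|² + Re ⟨a, 2 b h⟩`, and the real and imaginary
parts of `zₖ`, as well as `Re ⟨a, 2 b h⟩`, are real linear combinations of the independent
`N(0, 1/2)` coordinates of `a`, hence centred Gaussians, of variances `1/2` and `2 b² ‖h‖²`.
Gaussian integration by parts gives `E X⁴ = 3 v²` and `E X⁸ = 105 v⁴`, which bounds the `L⁴` norm of
each of the five summands; Minkowski's inequality in `L⁴` adds them up, and Cauchy–Schwarz together
with `2 √105 + 2 √3 ≤ 24` produces the constant `576 = 24²`.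
-/

open scoped BigOperators ENNReal NNReal Nat
open MeasureTheory ProbabilityTheory Matrix Real Complex

lemma rpow_inv_four_pow_four {x : ℝ} (hx : 0 ≤ x) : (x ^ (4⁻¹ : ℝ)) ^ 4 = x := by
  simpa using rpow_inv_natCast_pow hx (n := 4) four_ne_zero

namespace MeasureTheory

variable {α : Type*} {mα : MeasurableSpace α} {μ : Measure α} {f : α → ℝ} {p : ℕ}

lemma memLp_iff_integrable_abs_pow (hp : p ≠ 0) (hf : AEStronglyMeasurable f μ) :
    MemLp f p μ ↔ Integrable (fun x ↦ |f x| ^ p) μ := by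
  rw [← integrable_norm_rpow_iff hf (by exact_mod_cast hp) (by simp)]
  simp

lemma MemLp.eLpNorm_le_ofReal_iff (hp : p ≠ 0) (hf : MemLp f p μ) {A : ℝ} (hA : 0 ≤ A) :
    eLpNorm f p μ ≤ ENNReal.ofReal A ↔ ∫ x, |f x| ^ p ∂μ ≤ A ^ p := by
  rw [hf.eLpNorm_eq_integral_rpow_norm (by exact_mod_cast hp) (by simp),
    ENNReal.ofReal_le_ofReal_iff hA, ENNReal.toReal_natCast,
    rpow_inv_le_iff_of_pos (integral_nonneg fun _ ↦ by positivity) hA (by positivity)]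
  simp

lemma integral_abs_pow_le_of_eLpNorm_le (hp : p ≠ 0) (hf : AEStronglyMeasurable f μ) {A : ℝ}
    (hA : 0 ≤ A) (h : eLpNorm f p μ ≤ ENNReal.ofReal A) : ∫ x, |f x| ^ p ∂μ ≤ A ^ p :=
  (MemLp.eLpNorm_le_ofReal_iff hp ⟨hf, h.trans_lt ENNReal.ofReal_lt_top⟩ hA).1 h

end MeasureTheory

namespace ProbabilityTheory

variable {μ : ℝ} {v : ℝ≥0}

lemma integrable_mul_gaussianPDFReal_iff (hv : v ≠ 0) {f : ℝ → ℝ} :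
    Integrable (fun x ↦ gaussianPDFReal μ v x * f x) ↔ Integrable f (gaussianReal μ v) := by
  rw [gaussianReal_of_var_ne_zero _ hv, integrable_withDensity_iff_integrable_smul'
    (measurable_gaussianPDF _ _) (ae_of_all _ fun _ ↦ gaussianPDF_lt_top)]
  simp

lemma integrable_pow_gaussianReal (k : ℕ) : Integrable (fun x ↦ x ^ k) (gaussianReal μ v) :=
  (memLp_id_gaussianReal k).integrable_norm_pow' |>.mono' (by fun_prop)
    (ae_of_all _ fun x ↦ by simp [norm_pow])

lemma hasDerivAt_gaussianPDFReal (x : ℝ) :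
    HasDerivAt (gaussianPDFReal μ v) (-((x - μ) / v) * gaussianPDFReal μ v x) x := by
  have h := ((((hasDerivAt_id' x).sub_const μ).pow 2).neg.div_const (2 * (v : ℝ))).exp.const_mul
    (√(2 * π * v))⁻¹
  refine h.congr_deriv ?_
  simp only [gaussianPDFReal, Pi.neg_apply, Pi.pow_apply]
  ring

lemma integral_pow_add_two_gaussianReal (v : ℝ≥0) (k : ℕ) :
    ∫ x, x ^ (k + 2) ∂gaussianReal 0 v = (k + 1) * v * ∫ x, x ^ k ∂gaussianReal 0 v := by
  rcases eq_or_ne v 0 with rfl | hv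
  · simp [gaussianReal_zero_var]
  simp only [integral_gaussianReal_eq_integral_smul hv, smul_eq_mul]
  have hint (j : ℕ) : Integrable (fun x ↦ gaussianPDFReal 0 v x * x ^ j) :=
    (integrable_mul_gaussianPDFReal_iff hv).2 (integrable_pow_gaussianReal j)
  have hderiv (x : ℝ) : HasDerivAt (fun x ↦ x ^ (k + 1) * gaussianPDFReal 0 v x)
      ((k + 1) * (gaussianPDFReal 0 v x * x ^ k) -
        (v : ℝ)⁻¹ * (gaussianPDFReal 0 v x * x ^ (k + 2))) x := by
    refine ((hasDerivAt_pow (k + 1) x).mul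
      (hasDerivAt_gaussianPDFReal (μ := 0) (v := v) x)).congr_deriv ?_
    push_cast
    ring
  have h := integral_eq_zero_of_hasDerivAt_of_integrable hderiv
    (((hint k).const_mul _).sub ((hint (k + 2)).const_mul _))
    ((hint (k + 1)).congr (ae_of_all _ fun x ↦ mul_comm _ _))
  rw [integral_sub ((hint k).const_mul _) ((hint (k + 2)).const_mul _), integral_const_mul,
    integral_const_mul, sub_eq_zero] at h
  have hv' : (v : ℝ) ≠ 0 := by exact_mod_cast hv
  field_simp at h
  linarith

-- For `k = 0` the truncated `2 * 0 - 1 = 0` gives `0‼ = 1`, as it should.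
lemma integral_pow_two_mul_gaussianReal (v : ℝ≥0) (k : ℕ) :
    ∫ x, x ^ (2 * k) ∂gaussianReal 0 v = (2 * k - 1)‼ * (v : ℝ) ^ k := by
  induction k with
  | zero => simp
  | succ k ih =>
    rw [show 2 * (k + 1) = 2 * k + 2 by ring, integral_pow_add_two_gaussianReal, ih,
      show 2 * k + 2 - 1 = 2 * k + 1 by omega, Nat.doubleFactorial_add_one]
    push_cast
    ring

lemma HasLaw.eLpNorm_comp {Ω 𝓧 E : Type*} {mΩ : MeasurableSpace Ω} {m𝓧 : MeasurableSpace 𝓧}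
    [NormedAddCommGroup E] {P : Measure Ω} {μ : Measure 𝓧} {X : Ω → 𝓧} (hX : HasLaw X μ P)
    {g : 𝓧 → E} (hg : AEStronglyMeasurable g μ) (p : ℝ≥0∞) :
    eLpNorm (g ∘ X) p P = eLpNorm g p μ := by
  rw [← hX.map_eq] at hg ⊢
  exact (eLpNorm_map_measure hg hX.aemeasurable).symm

variable {Ω ι : Type*} {mΩ : MeasurableSpace Ω} {P : Measure Ω} [IsProbabilityMeasure P]

lemma hasLaw_sum_mul_gaussianReal {v : ℝ≥0} {W : ι → Ω → ℝ} (hindep : iIndepFun W P)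
    (hW : ∀ i, HasLaw (W i) (gaussianReal 0 v) P) (c : ι → ℝ) (s : Finset ι) :
    HasLaw (fun ω ↦ ∑ i ∈ s, c i * W i ω) (gaussianReal 0 ((∑ i ∈ s, ‖c i‖₊ ^ 2) * v)) P := by
  induction s using Finset.cons_induction with
  | empty =>
    simpa [gaussianReal_zero_var] using hasLaw_dirac_of_ae_eq (P := P) (ae_of_all _ fun _ ↦ rfl)
  | cons i s hi ih =>
    have hcW (j : ι) : HasLaw (fun ω ↦ c j * W j ω) (gaussianReal 0 (‖c j‖₊ ^ 2 * v)) P := by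
      convert gaussianReal_const_mul (hW j) (c j) using 2
      · simp
      · ext; simp
    have hind : IndepFun (∑ j ∈ s, fun ω ↦ c j * W j ω) (fun ω ↦ c i * W i ω) P :=
      (hindep.comp (fun j x ↦ c j * x) fun j ↦ measurable_const_mul _).indepFun_finsetSum_of_notMem₀
        (fun j ↦ (hcW j).aemeasurable) hi
    rw [Finset.sum_fn] at hind
    have h := hind.symm.hasLaw_fun_add (hcW i) ih
    rw [gaussianReal_conv_gaussianReal, zero_add, ← add_mul] at h
    simpa only [Finset.sum_cons] using h

lemma eLpNorm_const_mul_sq_gaussianReal_le (c : ℝ) (v : ℝ≥0) :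
    eLpNorm (fun x ↦ c * x ^ 2) 4 (gaussianReal 0 v) ≤
      ENNReal.ofReal (|c| * 105 ^ (4⁻¹ : ℝ) * v) := by
  have habs (x : ℝ) : |c * x ^ 2| ^ 4 = c ^ 4 * x ^ (2 * 4) := by
    rw [(by decide : Even 4).pow_abs]; ring
  have hmem : MemLp (fun x ↦ c * x ^ 2) (4 : ℕ) (gaussianReal 0 v) := by
    rw [memLp_iff_integrable_abs_pow four_ne_zero (by fun_prop)]
    simpa only [habs] using (integrable_pow_gaussianReal (2 * 4)).const_mul (c ^ 4)
  refine (hmem.eLpNorm_le_ofReal_iff four_ne_zero (by positivity)).2 ?_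
  simp only [habs, integral_const_mul, integral_pow_two_mul_gaussianReal]
  rw [mul_pow, mul_pow, (by decide : Even 4).pow_abs, rpow_inv_four_pow_four (by norm_num)]
  norm_num [Nat.doubleFactorial, mul_assoc]

lemma eLpNorm_gaussianReal_le (v : ℝ≥0) :
    eLpNorm id 4 (gaussianReal 0 v) ≤ ENNReal.ofReal (3 ^ (4⁻¹ : ℝ) * √v) := by
  refine ((memLp_id_gaussianReal' (4 : ℕ) (by simp)).eLpNorm_le_ofReal_iff four_ne_zero
    (by positivity)).2 ?_
  simp only [id, (by decide : Even 4).pow_abs]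
  rw [show 4 = 2 * 2 from rfl, integral_pow_two_mul_gaussianReal, mul_pow,
    rpow_inv_four_pow_four (by norm_num), pow_mul, sq_sqrt v.coe_nonneg]
  norm_num [Nat.doubleFactorial]

end ProbabilityTheory

section RealCoords

variable {ι : Type*} [Fintype ι]

def realCoords (z : ι → ℂ) : ι × Bool → ℝ := fun p ↦ if p.2 then (z p.1).re else (z p.1).im

lemma re_star_dotProduct_eq_sum_realCoords (z u : ι → ℂ) :
    (star z ⬝ᵥ u).re = ∑ p, realCoords u p * realCoords z p := by
  simp [dotProduct, Fintype.sum_prod_type, realCoords, Complex.mul_re, mul_comm]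

lemma sum_realCoords_sq (u : ι → ℂ) : ∑ p, realCoords u p ^ 2 = (star u ⬝ᵥ u).re := by
  simp_rw [re_star_dotProduct_eq_sum_realCoords, sq]

lemma re_star_dotProduct_self_nonneg (u : ι → ℂ) : 0 ≤ (star u ⬝ᵥ u).re := by
  rw [← sum_realCoords_sq]; positivity

lemma im_star_dotProduct (z u : ι → ℂ) : (star z ⬝ᵥ u).im = (star z ⬝ᵥ (-I) • u).re := by
  simp [dotProduct_smul]

lemma star_smul_dotProduct_smul (c : ℂ) (u : ι → ℂ) :
    star (c • u) ⬝ᵥ (c • u) = normSq c * (star u ⬝ᵥ u) := by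
  rw [star_smul, smul_dotProduct, dotProduct_smul, smul_smul, smul_eq_mul, normSq_eq_conj_mul_self,
    Complex.star_def]

lemma star_dotProduct_vecMulVec_mulVec (z u : ι → ℂ) :
    star z ⬝ᵥ (vecMulVec u (star u) *ᵥ z) = normSq (star z ⬝ᵥ u) := by
  rw [vecMulVec_mulVec, dotProduct_smul, op_smul_eq_mul, normSq_eq_conj_mul_self,
    ← Complex.star_def, ← star_dotProduct_star, star_star, dotProduct_comm, mul_comm]

lemma star_dotProduct_self_of_orthonormal {u₁ u₂ u₃ : ι → ℂ}
    (hu₁ : star u₁ ⬝ᵥ u₁ = 1) (hu₂ : star u₂ ⬝ᵥ u₂ = 1) (hu₃ : star u₃ ⬝ᵥ u₃ = 1)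
    (hu₁₂ : star u₁ ⬝ᵥ u₂ = 0) (hu₁₃ : star u₁ ⬝ᵥ u₃ = 0) (hu₂₃ : star u₂ ⬝ᵥ u₃ = 0)
    (σ₁ σ₂ σ₃ : ℂ) :
    star (σ₁ • u₁ + σ₂ • u₂ + σ₃ • u₃) ⬝ᵥ (σ₁ • u₁ + σ₂ • u₂ + σ₃ • u₃) =
      ((‖σ₁‖ ^ 2 + ‖σ₂‖ ^ 2 + ‖σ₃‖ ^ 2 : ℝ) : ℂ) := by
  have hswap {v w : ι → ℂ} (h : star v ⬝ᵥ w = 0) : star w ⬝ᵥ v = 0 := by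
    rw [← star_star v, star_dotProduct_star, h, star_zero]
  simp only [star_add, star_smul, add_dotProduct, dotProduct_add, smul_dotProduct, dotProduct_smul,
    hu₁, hu₂, hu₃, hu₁₂, hu₁₃, hu₂₃, hswap hu₁₂, hswap hu₁₃, hswap hu₂₃, smul_eq_mul,
    Complex.star_def]
  push_cast
  simp only [← mul_conj']
  ring

end RealCoords

section ComplexGaussianVector

variable {Ω ι : Type*} [Fintype ι] {mΩ : MeasurableSpace Ω} {P : Measure Ω} {a : Ω → ι → ℂ}

lemma aemeasurable_of_realCoords (h : ∀ p, AEMeasurable (fun ω ↦ realCoords (a ω) p) P) :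
    AEMeasurable a P :=
  aemeasurable_pi_lambda _ fun i ↦ aemeasurable_of_re_im (h (i, true)) (h (i, false))

variable [IsProbabilityMeasure P] {v : ℝ≥0}

lemma hasLaw_re_star_dotProduct (hindep : iIndepFun (fun p ω ↦ realCoords (a ω) p) P)
    (hgauss : ∀ p, HasLaw (fun ω ↦ realCoords (a ω) p) (gaussianReal 0 v) P) (u : ι → ℂ)
    {V : ℝ≥0} (hV : (V : ℝ) = (star u ⬝ᵥ u).re * v) :
    HasLaw (fun ω ↦ (star (a ω) ⬝ᵥ u).re) (gaussianReal 0 V) P := by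
  convert hasLaw_sum_mul_gaussianReal hindep hgauss (realCoords u) Finset.univ using 2
  · exact re_star_dotProduct_eq_sum_realCoords _ _
  · ext
    simp [hV, ← sum_realCoords_sq]

lemma eLpNorm_re_star_dotProduct_le (hindep : iIndepFun (fun p ω ↦ realCoords (a ω) p) P)
    (hgauss : ∀ p, HasLaw (fun ω ↦ realCoords (a ω) p) (gaussianReal 0 v) P) (u : ι → ℂ) :
    eLpNorm (fun ω ↦ (star (a ω) ⬝ᵥ u).re) 4 P ≤
      ENNReal.ofReal (3 ^ (4⁻¹ : ℝ) * √((star u ⬝ᵥ u).re * v)) := by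
  have hV : 0 ≤ (star u ⬝ᵥ u).re * v := mul_nonneg (re_star_dotProduct_self_nonneg u) v.2
  have hX := hasLaw_re_star_dotProduct hindep hgauss u (V := ⟨_, hV⟩) rfl
  rw [← Function.id_comp (fun ω ↦ (star (a ω) ⬝ᵥ u).re), hX.eLpNorm_comp (by fun_prop)]
  exact eLpNorm_gaussianReal_le _

lemma eLpNorm_const_mul_normSq_star_dotProduct_le
    (hindep : iIndepFun (fun p ω ↦ realCoords (a ω) p) P)
    (hgauss : ∀ p, HasLaw (fun ω ↦ realCoords (a ω) p) (gaussianReal 0 v) P) (u : ι → ℂ) (c : ℝ) :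
    eLpNorm (fun ω ↦ c * normSq (star (a ω) ⬝ᵥ u)) 4 P ≤
      ENNReal.ofReal (2 * (|c| * 105 ^ (4⁻¹ : ℝ) * ((star u ⬝ᵥ u).re * v))) := by
  have hV : 0 ≤ (star u ⬝ᵥ u).re * v := mul_nonneg (re_star_dotProduct_self_nonneg u) v.2
  have hX {w : ι → ℂ} (hw : star w ⬝ᵥ w = star u ⬝ᵥ u) :
      HasLaw (fun ω ↦ (star (a ω) ⬝ᵥ w).re) (gaussianReal 0 ⟨_, hV⟩) P :=
    hasLaw_re_star_dotProduct hindep hgauss w (by rw [hw]; rfl)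
  have hsq {w : ι → ℂ} (hw : star w ⬝ᵥ w = star u ⬝ᵥ u) :
      eLpNorm (fun ω ↦ c * (star (a ω) ⬝ᵥ w).re ^ 2) 4 P ≤
        ENNReal.ofReal (|c| * 105 ^ (4⁻¹ : ℝ) * ((star u ⬝ᵥ u).re * v)) := by
    rw [← Function.comp_def (fun x ↦ c * x ^ 2), (hX hw).eLpNorm_comp (by fun_prop)]
    exact eLpNorm_const_mul_sq_gaussianReal_le c _
  have ha := aemeasurable_of_realCoords fun p ↦ (hgauss p).aemeasurable
  have hIu : star ((-I) • u) ⬝ᵥ (-I) • u = star u ⬝ᵥ u := by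
    rw [star_smul_dotProduct_smul]; simp
  have hsplit : (fun ω ↦ c * normSq (star (a ω) ⬝ᵥ u)) =
      (fun ω ↦ c * (star (a ω) ⬝ᵥ u).re ^ 2) + fun ω ↦ c * (star (a ω) ⬝ᵥ (-I) • u).re ^ 2 := by
    ext ω
    simp only [Pi.add_apply, normSq_apply, ← im_star_dotProduct]
    ring
  rw [hsplit, two_mul, ENNReal.ofReal_add (by positivity) (by positivity)]
  exact (eLpNorm_add_le (by fun_prop) (by fun_prop) (by norm_num)).trans
    (add_le_add (hsq rfl) (hsq hIu))

lemma eLpNorm_quadratic_add_re_le (hindep : iIndepFun (fun p ω ↦ realCoords (a ω) p) P)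
    (hgauss : ∀ p, HasLaw (fun ω ↦ realCoords (a ω) p) (gaussianReal 0 v) P)
    (u₁ u₂ w : ι → ℂ) (c₁ c₂ : ℝ) :
    eLpNorm (fun ω ↦ c₁ * normSq (star (a ω) ⬝ᵥ u₁) + c₂ * normSq (star (a ω) ⬝ᵥ u₂) +
        (star (a ω) ⬝ᵥ w).re) 4 P ≤
      ENNReal.ofReal (2 * (|c₁| * 105 ^ (4⁻¹ : ℝ) * ((star u₁ ⬝ᵥ u₁).re * v)) +
        2 * (|c₂| * 105 ^ (4⁻¹ : ℝ) * ((star u₂ ⬝ᵥ u₂).re * v)) +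
        3 ^ (4⁻¹ : ℝ) * √((star w ⬝ᵥ w).re * v)) := by
  have ha := aemeasurable_of_realCoords fun p ↦ (hgauss p).aemeasurable
  have hu₁ := re_star_dotProduct_self_nonneg u₁
  have hu₂ := re_star_dotProduct_self_nonneg u₂
  rw [ENNReal.ofReal_add (by positivity) (by positivity),
    ENNReal.ofReal_add (by positivity) (by positivity)]
  refine (eLpNorm_add_le (by fun_prop) (by fun_prop) (by norm_num)).trans (add_le_add ?_
    (eLpNorm_re_star_dotProduct_le hindep hgauss w))
  exact (eLpNorm_add_le (by fun_prop) (by fun_prop) (by norm_num)).trans (add_le_add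
    (eLpNorm_const_mul_normSq_star_dotProduct_le hindep hgauss u₁ c₁)
    (eLpNorm_const_mul_normSq_star_dotProduct_le hindep hgauss u₂ c₂))

end ComplexGaussianVector

lemma weighted_sum_pow_four_le (x y z : ℝ) :
    (105 ^ (4⁻¹ : ℝ) * x + 105 ^ (4⁻¹ : ℝ) * y + 3 ^ (4⁻¹ : ℝ) * z) ^ 4 ≤
      576 * (x ^ 2 + y ^ 2 + z ^ 2 / 2) ^ 2 := by
  set α : ℝ := 105 ^ (4⁻¹ : ℝ)
  set β : ℝ := 3 ^ (4⁻¹ : ℝ)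
  have hα : (α ^ 2) ^ 2 = 105 := by rw [← pow_mul]; exact rpow_inv_four_pow_four (by norm_num)
  have hβ : (β ^ 2) ^ 2 = 3 := by rw [← pow_mul]; exact rpow_inv_four_pow_four (by norm_num)
  have hα2 : α ^ 2 ≤ 41 / 4 := by nlinarith [sq_nonneg (α ^ 2)]
  have hβ2 : β ^ 2 ≤ 7 / 4 := by nlinarith [sq_nonneg (β ^ 2)]
  -- The gap is `α ^ 2 * (x - y) ^ 2 + (α * z - 2 * β * x) ^ 2 / 2 + (α * z - 2 * β * y) ^ 2 / 2`.
  have hcs : (α * x + α * y + β * z) ^ 2 ≤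
      (2 * α ^ 2 + 2 * β ^ 2) * (x ^ 2 + y ^ 2 + z ^ 2 / 2) := by
    nlinarith [sq_nonneg (α * (x - y)), sq_nonneg (α * z - 2 * β * x),
      sq_nonneg (α * z - 2 * β * y)]
  have hQ : 0 ≤ x ^ 2 + y ^ 2 + z ^ 2 / 2 := by positivity
  calc (α * x + α * y + β * z) ^ 4 = ((α * x + α * y + β * z) ^ 2) ^ 2 := by ring
    _ ≤ (24 * (x ^ 2 + y ^ 2 + z ^ 2 / 2)) ^ 2 := by
      gcongr
      exact hcs.trans (by gcongr; linarith)
    _ = 576 * (x ^ 2 + y ^ 2 + z ^ 2 / 2) ^ 2 := by ring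

/-- Fourth moment bound for `ξ = a* H a + 2 Re(b (a* h))` for a complex standard
Gaussian vector `a`, where `H = λ₁ u₁u₁* + λ₂ u₂u₂*` and `h = σ₁u₁ + σ₂u₂ + σ₃u₃`
with `u₁, u₂, u₃` orthonormal; here `‖H‖_F² = λ₁² + λ₂²` and
`‖h‖₂² = |σ₁|² + |σ₂|² + |σ₃|²`. -/
theorem stmt15 (n : ℕ) (Ω : Type) [MeasureSpace Ω] [IsProbabilityMeasure (ℙ : Measure Ω)]
    (a : Ω → Fin n → ℂ)
    (h_indep : iIndepFun
      (fun p : Fin n × Bool => fun ω =>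
        if p.2 then (a ω p.1).re else (a ω p.1).im) ℙ)
    (h_gauss : ∀ p : Fin n × Bool,
      Measure.map (fun ω => if p.2 then (a ω p.1).re else (a ω p.1).im) ℙ =
        gaussianReal 0 (2 : ℝ≥0)⁻¹)
    (b : ℝ) (u₁ u₂ u₃ : Fin n → ℂ)
    (hu₁ : star u₁ ⬝ᵥ u₁ = 1) (hu₂ : star u₂ ⬝ᵥ u₂ = 1) (hu₃ : star u₃ ⬝ᵥ u₃ = 1)
    (hu₁₂ : star u₁ ⬝ᵥ u₂ = 0) (hu₁₃ : star u₁ ⬝ᵥ u₃ = 0) (hu₂₃ : star u₂ ⬝ᵥ u₃ = 0)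
    (lam₁ lam₂ : ℝ) (σ₁ σ₂ σ₃ : ℂ)
    (H : Matrix (Fin n) (Fin n) ℂ)
    (hH : H = (lam₁ : ℂ) • vecMulVec u₁ (star u₁) + (lam₂ : ℂ) • vecMulVec u₂ (star u₂))
    (h : Fin n → ℂ) (hh : h = σ₁ • u₁ + σ₂ • u₂ + σ₃ • u₃) :
    (∫ ω, ((star (a ω) ⬝ᵥ H.mulVec (a ω)).re
        + 2 * ((b : ℂ) * (star (a ω) ⬝ᵥ h)).re) ^ 4) ≤
      576 * ((lam₁ ^ 2 + lam₂ ^ 2) +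
        b ^ 2 * (‖σ₁‖ ^ 2 + ‖σ₂‖ ^ 2 + ‖σ₃‖ ^ 2)) ^ 2 := by
  have hgauss (p : Fin n × Bool) :
      HasLaw (fun ω ↦ realCoords (a ω) p) (gaussianReal 0 2⁻¹) ℙ :=
    ⟨.of_map_ne_zero ((h_gauss p).symm ▸ IsProbabilityMeasure.ne_zero _), h_gauss p⟩
  have ha := aemeasurable_of_realCoords fun p ↦ (hgauss p).aemeasurable
  set S := ‖σ₁‖ ^ 2 + ‖σ₂‖ ^ 2 + ‖σ₃‖ ^ 2
  have hh2 : (star ((2 * b : ℂ) • h) ⬝ᵥ (2 * b : ℂ) • h).re = 4 * b ^ 2 * S := by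
    rw [star_smul_dotProduct_smul, hh,
      star_dotProduct_self_of_orthonormal hu₁ hu₂ hu₃ hu₁₂ hu₁₃ hu₂₃, ← ofReal_mul, ofReal_re,
      normSq_apply]
    simp only [mul_re, mul_im, ofReal_re, ofReal_im, re_ofNat, im_ofNat]
    ring
  have hξ : (fun ω ↦ (star (a ω) ⬝ᵥ H *ᵥ a ω).re + 2 * ((b : ℂ) * (star (a ω) ⬝ᵥ h)).re) =
      fun ω ↦ lam₁ * normSq (star (a ω) ⬝ᵥ u₁) + lam₂ * normSq (star (a ω) ⬝ᵥ u₂) +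
        (star (a ω) ⬝ᵥ (2 * b : ℂ) • h).re := by
    ext ω
    simp only [hH, coe_smul, add_mulVec, smul_mulVec, dotProduct_add, dotProduct_smul,
      star_dotProduct_vecMulVec_mulVec, real_smul, add_re, mul_re, mul_im, ofReal_re, ofReal_im,
      re_ofNat, im_ofNat, smul_eq_mul, mul_zero, zero_mul, sub_zero, add_zero]
    ring
  have hL4 := eLpNorm_quadratic_add_re_le h_indep hgauss u₁ u₂ ((2 * b : ℂ) • h) lam₁ lam₂
  rw [← hξ, hu₁, hu₂, hh2, one_re] at hL4
  calc _ = ∫ ω, |(star (a ω) ⬝ᵥ H *ᵥ a ω).re + 2 * ((b : ℂ) * (star (a ω) ⬝ᵥ h)).re| ^ 4 := by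
        simp_rw [(by decide : Even 4).pow_abs]
    _ ≤ _ := integral_abs_pow_le_of_eLpNorm_le four_ne_zero (by fun_prop) (by positivity) hL4
    _ ≤ _ := by
      convert weighted_sum_pow_four_le |lam₁| |lam₂| √(4 * b ^ 2 * S * (2⁻¹ : ℝ≥0)) using 2
      · push_cast; ring
      · rw [sq_abs, sq_abs, sq_sqrt (by positivity)]; push_cast; ring
end
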